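/- For every vertex v of T and every integer k with 1 ≤ k < height of T, let R be the highest vertex of the decomposition D that contains v and has height at most k (such R exists and is unique on the path of D from its root to the leaf {v}). Then the height of R is at least max(⌊ε(k+1)⌋, 1). -/

import Mathlib

namespace VEB

inductive OTree : Type where
  | node : List OTree → OTree

def OTree.children : OTree → List OTree
  | .node cs => cs

mutual
  def height : OTree → ℕ
    | .node cs => 1 + heightList cs
  def heightList : List OTree → ℕ
    | [] => 0
    | c :: cs => max (height c) (heightList cs)
end

def subtreeAt? : OTree → List ℕ → Option OTree
  | t, [] => some t
  | t, i :: p =>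
    match t.children[i]? with
    | some c => subtreeAt? c p
    | none => none

/-- `p` is (the path of) a vertex of `t`. -/
def IsVertex (t : OTree) (p : List ℕ) : Prop := (subtreeAt? t p).isSome

/-- `p` is a leaf of `t`. -/
def IsLeaf (t : OTree) (p : List ℕ) : Prop := subtreeAt? t p = some (.node [])

/-- All leaves of `t` are at the same depth (the bottom level). -/
def Uniform (t : OTree) : Prop := ∀ p, IsLeaf t p → p.length + 1 = height t

/-- The top `m+1` levels of `t` (the truncation of height `m+1`). -/
def trunc : ℕ → OTree → OTree
  | 0, _ => .node []
  | m+1, t => .node (t.children.map (trunc m))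

/-- Paths of the vertices at depth `m`, in left-to-right order. -/
def levelPaths : ℕ → OTree → List (List ℕ)
  | 0, _ => [[]]
  | m+1, t => (t.children.zipIdx.map fun ic => (levelPaths m ic.1).map (ic.2 :: ·)).flatten

/-- The level at which a tree of height `h` is cut: `max ⌊ε h⌋ 1`. -/
noncomputable def cutLevel (ε : ℝ) (h : ℕ) : ℕ := max ⌊ε * (h : ℝ)⌋₊ 1

/-- The van Emde Boas order of the vertex paths of `t` (with recursion fuel). -/
noncomputable def vEBAux (ε : ℝ) : ℕ → OTree → List (List ℕ)
  | 0, _ => []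
  | fuel+1, t =>
    if height t ≤ 1 then [[]]
    else
      let m := cutLevel ε (height t)
      vEBAux ε fuel (trunc (m - 1) t) ++
        ((levelPaths m t).map fun q =>
          match subtreeAt? t q with
          | some s => (vEBAux ε fuel s).map (q ++ ·)
          | none => []).flatten

/-- The van Emde Boas order `vEB_ε(t)` of the vertex paths of `t`. -/
noncomputable def vEB (ε : ℝ) (t : OTree) : List (List ℕ) := vEBAux ε (height t) t

/-- Position (index) of vertex `p` in the van Emde Boas order. -/
noncomputable def pos (ε : ℝ) (t : OTree) (p : List ℕ) : ℕ := (vEB ε t).idxOf p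

/-- `A` is a set of vertices occupying consecutive positions in `vEB_ε(t)`. -/
def MemInterval (ε : ℝ) (t : OTree) (A : Set (List ℕ)) : Prop :=
  ∃ i n, A = {p | p ∈ ((vEB ε t).drop i).take n}

/-- The vertices of the decomposition `D` of `t`: pairs `(p, k)` of the root path
and the height of a decomposition subtree (with recursion fuel). -/
noncomputable def decompAux (ε : ℝ) : ℕ → OTree → List (List ℕ × ℕ)
  | 0, _ => []
  | fuel+1, t =>
    if height t ≤ 1 then [([], 1)]
    else
      let m := cutLevel ε (height t)
      ([], height t) ::
        (decompAux ε fuel (trunc (m - 1) t) ++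
          ((levelPaths m t).map fun q =>
            match subtreeAt? t q with
            | some s => (decompAux ε fuel s).map fun r => (q ++ r.1, r.2)
            | none => []).flatten)

/-- The vertices of the decomposition `D` of `t`. -/
noncomputable def decompVerts (ε : ℝ) (t : OTree) : List (List ℕ × ℕ) :=
  decompAux ε (height t) t

/-- The children in the decomposition tree `D` of the decomposition vertex `(p, k)`:
the top tree followed by the bottom trees in left-to-right order. -/
noncomputable def dChildren (ε : ℝ) (t : OTree) (p : List ℕ) (k : ℕ) : List (List ℕ × ℕ) :=
  if k ≤ 1 then []
  else
    match subtreeAt? t p with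
    | some s =>
      (p, cutLevel ε k) ::
        (levelPaths (cutLevel ε k) s).map fun q => (p ++ q, k - cutLevel ε k)
    | none => []

/-- The decomposition subtree `(p, k)` contains the vertex `w` of `t`;
equivalently, the leaf `{w}` of `D` lies in the subtree of `D` rooted at `(p, k)`. -/
def DContains (p : List ℕ) (k : ℕ) (w : List ℕ) : Prop :=
  p <+: w ∧ w.length < p.length + k

/-- Vertex `v` is to the left of the branch with leaf `ℓ`. -/
def LeftOfBranch (v ℓ : List ℕ) : Prop := List.Lex (· < ·) v (ℓ.take v.length)

/-- Vertex `v` is to the right of the branch with leaf `ℓ`. -/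
def RightOfBranch (v ℓ : List ℕ) : Prop := List.Lex (· < ·) (ℓ.take v.length) v

/-- Every internal vertex of `t` has at least `a` children. -/
def MinArity (t : OTree) (a : ℕ) : Prop :=
  ∀ p s, subtreeAt? t p = some s → s.children ≠ [] → a ≤ s.children.length

/-- Every internal vertex of `t` has at most `b` children. -/
def MaxArity (t : OTree) (b : ℕ) : Prop :=
  ∀ p s, subtreeAt? t p = some s → s.children.length ≤ b

/-- `w` lies on the leftmost branch descending from `v` (always taking the leftmost child). -/
def OnLeftmostBranch (v w : List ℕ) : Prop :=
  v <+: w ∧ ∀ n (hn : n < w.length), v.length ≤ n → w.get ⟨n, hn⟩ = 0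

/-- `w` lies on the rightmost branch descending from `v` (always taking the rightmost child). -/
def OnRightmostBranch (t : OTree) (v w : List ℕ) : Prop :=
  v <+: w ∧ ∀ n (hn : n < w.length), v.length ≤ n →
    ∀ s, subtreeAt? t (w.take n) = some s → w.get ⟨n, hn⟩ + 1 = s.children.length


/-
The bound `max ⌊ε(k+1)⌋ 1` is the cut level of a tree of height `k + 1`. Descend the
decomposition along the branch of `v`: a subtree of height `h > k` is cut at level
`c = max ⌊εh⌋ 1 ≥ max ⌊ε(k+1)⌋ 1`, and since `ε ≤ 1/2` both its top tree (height `c`) and, by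
uniformity, the bottom tree containing `v` (height `h - c ≥ c`) are at least that high. So the
first subtree of height at most `k` met on the way down already satisfies the bound, and the
highest one is at least as high.
-/

lemma height_pos (t : OTree) : 1 ≤ height t := by
  cases t with
  | node cs => rw [height]; omega

lemma height_le_heightList_of_mem {c : OTree} {cs : List OTree} (h : c ∈ cs) :
    height c ≤ heightList cs := by
  induction cs with
  | nil => simp at h
  | cons d ds ih =>
    rw [heightList]
    rcases List.mem_cons.1 h with rfl | h
    · exact le_max_left _ _
    · exact (ih h).trans (le_max_right _ _)

lemma exists_mem_heightList_eq {cs : List OTree} (h : cs ≠ []) :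
    ∃ c ∈ cs, heightList cs = height c := by
  induction cs with
  | nil => simp at h
  | cons d ds ih =>
    rcases eq_or_ne ds [] with rfl | hds
    · exact ⟨d, by simp, by rw [heightList, heightList]; omega⟩
    · obtain ⟨c, hc, hch⟩ := ih hds
      rw [heightList]
      rcases le_total (height d) (heightList ds) with hle | hle
      · exact ⟨c, by simp [hc], by omega⟩
      · exact ⟨d, by simp, by omega⟩

lemma subtreeAt?_node_cons (cs : List OTree) (i : ℕ) (p : List ℕ) :
    subtreeAt? (.node cs) (i :: p) =
      match cs[i]? with
      | some c => subtreeAt? c p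
      | none => none := rfl

lemma subtreeAt?_append (q p : List ℕ) (t : OTree) :
    subtreeAt? t (q ++ p) = (subtreeAt? t q).bind (subtreeAt? · p) := by
  induction q generalizing t with
  | nil => simp [subtreeAt?]
  | cons i q ih =>
    cases t with
    | node cs =>
      rw [List.cons_append, subtreeAt?_node_cons, subtreeAt?_node_cons]
      cases hc : cs[i]? with
      | none => simp
      | some c => simpa using ih c

lemma length_add_height_le {t s : OTree} {q : List ℕ} (h : subtreeAt? t q = some s) :
    q.length + height s ≤ height t := by
  induction q generalizing t with
  | nil => simp_all [subtreeAt?]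
  | cons i p ih =>
    cases t with
    | node cs =>
      rw [subtreeAt?_node_cons] at h
      cases hc : cs[i]? with
      | none => simp [hc] at h
      | some c =>
        rw [hc] at h
        have := height_le_heightList_of_mem (List.mem_of_getElem? hc)
        have := ih h
        rw [height, List.length_cons]
        omega

lemma IsVertex.length_lt_height {t : OTree} {q : List ℕ} (h : IsVertex t q) :
    q.length < height t := by
  obtain ⟨s, hs⟩ := Option.isSome_iff_exists.mp h
  have := length_add_height_le hs
  have := height_pos s
  omega

lemma exists_isLeaf_length_add_one_eq_height (t : OTree) :
    ∃ p, IsLeaf t p ∧ p.length + 1 = height t := by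
  obtain ⟨n, hn⟩ : ∃ n, height t ≤ n := ⟨height t, le_rfl⟩
  induction n generalizing t with
  | zero => have := height_pos t; omega
  | succ n ih =>
    cases t with
    | node cs =>
      rcases eq_or_ne cs [] with rfl | hcs
      · exact ⟨[], rfl, by simp [height, heightList]⟩
      · obtain ⟨c, hc, hch⟩ := exists_mem_heightList_eq hcs
        have hht : height (.node cs) = 1 + height c := by rw [height, hch]
        obtain ⟨i, hi⟩ := List.getElem?_of_mem hc
        obtain ⟨p, hp, hpl⟩ := ih c (by omega)
        refine ⟨i :: p, ?_, by simp [hht]; omega⟩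
        rw [IsLeaf, subtreeAt?_node_cons, hi]
        exact hp

lemma isLeaf_append {t s : OTree} {q p : List ℕ} (hs : subtreeAt? t q = some s)
    (hp : IsLeaf s p) : IsLeaf t (q ++ p) := by
  rw [IsLeaf, subtreeAt?_append, hs]
  exact hp

lemma exists_subtreeAt?_of_isVertex_append {t : OTree} {q p : List ℕ}
    (h : IsVertex t (q ++ p)) : ∃ s, subtreeAt? t q = some s ∧ IsVertex s p := by
  rw [IsVertex, subtreeAt?_append, Option.isSome_bind] at h
  cases hq : subtreeAt? t q with
  | none => simp [hq] at h
  | some s => exact ⟨s, rfl, by simpa [IsVertex, hq] using h⟩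

lemma mem_levelPaths_length {t : OTree} {q : List ℕ} (h : IsVertex t q) :
    q ∈ levelPaths q.length t := by
  induction q generalizing t with
  | nil => simp [levelPaths]
  | cons i q ih =>
    cases t with
    | node cs =>
      rw [IsVertex, subtreeAt?_node_cons] at h
      cases hc : cs[i]? with
      | none => simp [hc] at h
      | some c =>
        rw [hc] at h
        rw [List.length_cons, levelPaths, List.mem_flatten]
        refine ⟨(levelPaths q.length c).map (i :: ·), List.mem_map.mpr ⟨(c, i), ?_, rfl⟩,
          List.mem_map.mpr ⟨q, ih h, rfl⟩⟩
        exact List.mem_zipIdx_iff_getElem?.mpr hc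

namespace Uniform

variable {t s : OTree} (ht : Uniform t)
include ht

lemma length_add_height {q : List ℕ} (hs : subtreeAt? t q = some s) :
    q.length + height s = height t := by
  obtain ⟨p, hp, hpl⟩ := exists_isLeaf_length_add_one_eq_height s
  have := ht (q ++ p) (isLeaf_append hs hp)
  rw [List.length_append] at this
  omega

lemma subtree {q : List ℕ} (hs : subtreeAt? t q = some s) : Uniform s := by
  intro p hp
  have h1 := ht (q ++ p) (isLeaf_append hs hp)
  have h2 := ht.length_add_height hs
  rw [List.length_append] at h1
  omega

end Uniform

lemma height_trunc (j : ℕ) (t : OTree) : height (trunc j t) = min (j + 1) (height t) := by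
  induction j generalizing t with
  | zero =>
    have := height_pos t
    rw [trunc, height, heightList]
    omega
  | succ j ih =>
    cases t with
    | node cs =>
      have hcs : heightList (cs.map (trunc j)) = min (j + 1) (heightList cs) := by
        induction cs with
        | nil => simp [heightList]
        | cons d ds ihl =>
          rw [List.map_cons, heightList, heightList, ihl, ih d]
          omega
      rw [trunc, height, height, OTree.children, hcs]
      omega

lemma subtreeAt?_trunc {p : List ℕ} {j : ℕ} (t : OTree) (hp : p.length ≤ j) :
    subtreeAt? (trunc j t) p = (subtreeAt? t p).map (trunc (j - p.length)) := by
  induction p generalizing j t with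
  | nil => simp [subtreeAt?]
  | cons i p ih =>
    obtain ⟨j, rfl⟩ : ∃ j', j = j' + 1 := ⟨j - 1, by simp at hp; omega⟩
    cases t with
    | node cs =>
      rw [trunc, subtreeAt?_node_cons, subtreeAt?_node_cons, OTree.children, List.getElem?_map]
      cases hc : cs[i]? with
      | none => simp
      | some c =>
        simpa using ih c (by simpa using hp)

lemma IsVertex.trunc {t : OTree} {v : List ℕ} {j : ℕ} (hv : IsVertex t v)
    (hj : v.length ≤ j) : IsVertex (trunc j t) v := by
  obtain ⟨s, hs⟩ := Option.isSome_iff_exists.mp hv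
  rw [IsVertex, subtreeAt?_trunc t hj, hs]
  rfl

lemma Uniform.trunc {t : OTree} {j : ℕ} (ht : Uniform t) (hj : j + 1 ≤ height t) :
    Uniform (trunc j t) := by
  intro p hp
  have hpj : p.length ≤ j := by
    have := IsVertex.length_lt_height (t := VEB.trunc j t) (by rw [IsVertex, hp]; rfl)
    rw [height_trunc] at this
    omega
  rw [IsLeaf, subtreeAt?_trunc t hpj, Option.map_eq_some_iff] at hp
  obtain ⟨s, hs, hts⟩ := hp
  rw [height_trunc]
  -- a vertex of `t` above depth `j` that is a leaf of the truncation is already a leaf of `t`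
  cases hd : j - p.length with
  | zero => omega
  | succ d =>
    rw [hd, VEB.trunc] at hts
    cases s with
    | node cs =>
      obtain rfl : cs = [] := by simpa [OTree.children] using hts
      have := ht p hs
      omega

lemma two_mul_cutLevel_le {ε : ℝ} (hε : ε ≤ 1/2) {h : ℕ} (hh : 2 ≤ h) :
    2 * cutLevel ε h ≤ h := by
  have hfloor : ⌊ε * h⌋₊ ≤ h / 2 := by
    rw [← Nat.floor_div_eq_div (K := ℝ), Nat.cast_ofNat]
    exact Nat.floor_le_floor (by nlinarith [Nat.cast_nonneg (α := ℝ) h])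
  rw [cutLevel]
  omega

lemma cutLevel_mono {ε : ℝ} (hε : 0 ≤ ε) {a b : ℕ} (hab : a ≤ b) :
    cutLevel ε a ≤ cutLevel ε b :=
  max_le_max (Nat.floor_le_floor (by gcongr)) le_rfl

lemma root_mem_decompAux (ε : ℝ) (fuel : ℕ) (t : OTree) :
    ([], height t) ∈ decompAux ε (fuel + 1) t := by
  rw [decompAux]
  split_ifs with h
  · simp [le_antisymm h (height_pos t)]
  · exact List.mem_cons_self

lemma mem_decompAux_of_mem_top {ε : ℝ} {fuel : ℕ} {t : OTree} (hh : 2 ≤ height t)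
    {x : List ℕ × ℕ} (hx : x ∈ decompAux ε fuel (trunc (cutLevel ε (height t) - 1) t)) :
    x ∈ decompAux ε (fuel + 1) t := by
  rw [decompAux, if_neg (by omega)]
  exact List.mem_cons_of_mem _ (List.mem_append_left _ hx)

lemma mem_decompAux_of_mem_bottom {ε : ℝ} {fuel : ℕ} {t s : OTree} (hh : 2 ≤ height t)
    {q : List ℕ} (hq : q ∈ levelPaths (cutLevel ε (height t)) t)
    (hs : subtreeAt? t q = some s) {x : List ℕ × ℕ} (hx : x ∈ decompAux ε fuel s) :
    (q ++ x.1, x.2) ∈ decompAux ε (fuel + 1) t := by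
  rw [decompAux, if_neg (by omega)]
  refine List.mem_cons_of_mem _ (List.mem_append_right _ (List.mem_flatten.mpr ?_))
  refine ⟨_, List.mem_map.mpr ⟨q, hq, rfl⟩, ?_⟩
  rw [hs]
  exact List.mem_map.mpr ⟨x, hx, rfl⟩

lemma DContains.append_left {q w : List ℕ} {m : ℕ} (h : DContains q m w) (u : List ℕ) :
    DContains (u ++ q) m (u ++ w) :=
  ⟨(List.prefix_append_right_inj u).mpr h.1, by
    simp only [List.length_append]
    have := h.2
    omega⟩

lemma exists_mem_decompAux_dContains {ε : ℝ} (hε0 : 0 ≤ ε) (hε1 : ε ≤ 1/2) {k : ℕ}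
    (hk : 1 ≤ k) (fuel : ℕ) {t : OTree} {v : List ℕ} (ht : Uniform t) (hv : IsVertex t v)
    (hkt : cutLevel ε (k + 1) ≤ height t) (hfuel : height t ≤ fuel) :
    ∃ q m, (q, m) ∈ decompAux ε fuel t ∧ DContains q m v ∧
      cutLevel ε (k + 1) ≤ m ∧ m ≤ k := by
  induction fuel generalizing t v with
  | zero => have := height_pos t; omega
  | succ f ih =>
    by_cases hhk : height t ≤ k
    · exact ⟨[], height t, root_mem_decompAux ε f t,
        ⟨List.nil_prefix, by simpa using hv.length_lt_height⟩, hkt, hhk⟩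
    have hh : 2 ≤ height t := by omega
    set c := cutLevel ε (height t)
    have hc1 : 1 ≤ c := le_max_right _ _
    have hc2 : 2 * c ≤ height t := two_mul_cutLevel_le hε1 hh
    have hkc : cutLevel ε (k + 1) ≤ c := cutLevel_mono hε0 (by omega)
    rcases lt_or_ge v.length c with hvc | hvc
    · have htop : height (trunc (c - 1) t) = c := by rw [height_trunc]; omega
      obtain ⟨q, m, hmem, hq⟩ :=
        ih (ht.trunc (j := c - 1) (by omega)) (hv.trunc (by omega)) (by omega) (by omega)
      exact ⟨q, m, mem_decompAux_of_mem_top hh hmem, hq⟩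
    · rw [← List.take_append_drop c v] at hv ⊢
      obtain ⟨s, hs, hvs⟩ := exists_subtreeAt?_of_isVertex_append hv
      have hlen : (v.take c).length = c := by simp only [List.length_take]; omega
      have hsh := ht.length_add_height hs
      obtain ⟨q, m, hmem, hdc, hq⟩ := ih (ht.subtree hs) hvs (by omega) (by omega)
      have hlp := mem_levelPaths_length (t := t) (q := v.take c) (by rw [IsVertex, hs]; rfl)
      rw [hlen] at hlp
      exact ⟨_, m, mem_decompAux_of_mem_bottom hh hlp hs hmem, hdc.append_left _, hq⟩

/-- For every vertex `v` of `T` and every `k` with `1 ≤ k < height T`,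
the highest vertex `R = (p, m)` of the decomposition `D` that contains `v` and has height
at most `k` has height at least `max ⌊ε(k+1)⌋ 1`. -/
theorem highest_small_decomp_subtree_height
    (ε : ℝ) (hε0 : 0 < ε) (hε1 : ε ≤ 1/2) (t : OTree) (ht : Uniform t)
    (v : List ℕ) (hv : IsVertex t v)
    (k : ℕ) (hk1 : 1 ≤ k) (hk2 : k < height t)
    (p : List ℕ) (m : ℕ)
    (hR : (p, m) ∈ decompVerts ε t) (hcont : DContains p m v) (hm : m ≤ k)
    (hmax : ∀ q m', (q, m') ∈ decompVerts ε t → DContains q m' v → m' ≤ k → m' ≤ m) :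
    max ⌊ε * ((k : ℝ) + 1)⌋₊ 1 ≤ m := by
  have hlow : max ⌊ε * ((k : ℝ) + 1)⌋₊ 1 = cutLevel ε (k + 1) := by
    rw [cutLevel, Nat.cast_succ]
  have hkt : cutLevel ε (k + 1) ≤ height t := by
    have := two_mul_cutLevel_le hε1 (h := height t) (by omega)
    have := cutLevel_mono hε0.le (ε := ε) (a := k + 1) hk2
    omega
  obtain ⟨q, m', hmem, hdc, hlow', hm'⟩ :=
    exists_mem_decompAux_dContains hε0.le hε1 hk1 (height t) ht hv hkt le_rfl
  rw [hlow]
  exact hlow'.trans (hmax q m' hmem hdc hm')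

end VEB
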